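/- arXiv:0906.0120 — 7 statements merged into one kernel-verified Lean document; each statement's English description precedes it below -/
import Mathlib

section
/- Let V be a finite set, θ : 2^V → ℝ a set function, α > 0, and suppose that θ(A ∪ B) + θ(A ∩ B) − θ(A) − θ(B) ≤ α for all incomparable A, B ⊆ V. Let δ be the cut function of the complete graph on V. Then the function f defined by f(A) = θ(A)/α + δ(A) is submodular. -/
open scoped Classical
open Finset

/-- The cut function of a simple graph `G`: the number of edges with one endpoint
in `A` and the other outside `A`. -/
noncomputable def cutFun {V : Type*} [Fintype V] (G : SimpleGraph V) (A : Finset V) : ℝ :=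
  ((Finset.univ ×ˢ Finset.univ).filter
    (fun p : V × V => G.Adj p.1 p.2 ∧ p.1 ∈ A ∧ p.2 ∉ A)).card

lemma cutFun_top_eq {V : Type*} [Fintype V] [DecidableEq V] (A : Finset V) :
    cutFun (⊤ : SimpleGraph V) A = (A.card : ℝ) * ((Fintype.card V : ℝ) - A.card) := by
  have h2 : ((A ×ˢ Aᶜ).card : ℝ) = (A.card : ℝ) * ((Fintype.card V : ℝ) - A.card) := by
    rw [Finset.card_product, Finset.card_compl]
    have h := Finset.card_le_univ A
    push_cast [Nat.cast_sub h]
    ring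
  rw [cutFun, ← h2]
  norm_cast
  congr 1
  ext p
  simp only [Finset.mem_filter, Finset.mem_product, Finset.mem_univ, true_and,
    SimpleGraph.top_adj, Finset.mem_compl]
  constructor
  · rintro ⟨-, h1, hb⟩; exact ⟨h1, hb⟩
  · rintro ⟨h1, hb⟩; exact ⟨fun h => hb (h ▸ h1), h1, hb⟩

theorem theta_div_alpha_add_cut_submodular {V : Type*} [Fintype V] [DecidableEq V]
    (θ : Finset V → ℝ) (α : ℝ) (hα : 0 < α)
    (hbound : ∀ A B : Finset V, ¬ A ⊆ B → ¬ B ⊆ A →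
      θ (A ∪ B) + θ (A ∩ B) - θ A - θ B ≤ α)
    (f : Finset V → ℝ) (hf : ∀ A, f A = θ A / α + cutFun (⊤ : SimpleGraph V) A) :
    ∀ A B : Finset V, f A + f B ≥ f (A ∪ B) + f (A ∩ B) := by
  intro A B
  by_cases hAB : A ⊆ B
  · rw [Finset.union_eq_right.mpr hAB, Finset.inter_eq_left.mpr hAB]; linarith
  by_cases hBA : B ⊆ A
  · rw [Finset.union_eq_left.mpr hBA, Finset.inter_eq_right.mpr hBA]
  -- incomparable case
  have hθ : (θ (A ∪ B) + θ (A ∩ B) - θ A - θ B) / α ≤ 1 :=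
    (div_le_one hα).mpr (hbound A B hAB hBA)
  -- cardinal facts
  have hsum : A.card + B.card = (A ∪ B).card + (A ∩ B).card :=
    (Finset.card_union_add_card_inter A B).symm
  have hu : A.card < (A ∪ B).card := by
    apply Finset.card_lt_card
    rw [Finset.ssubset_def]
    refine ⟨Finset.subset_union_left, fun h => hBA ?_⟩
    exact (Finset.union_subset_iff.mp h).2
  have hi : (A ∩ B).card < A.card := by
    apply Finset.card_lt_card
    rw [Finset.ssubset_def]
    refine ⟨Finset.inter_subset_left, fun h => hAB ?_⟩
    exact h.trans Finset.inter_subset_right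
  have hcut : cutFun (⊤ : SimpleGraph V) A + cutFun (⊤ : SimpleGraph V) B ≥
      cutFun (⊤ : SimpleGraph V) (A ∪ B) + cutFun (⊤ : SimpleGraph V) (A ∩ B) + 1 := by
    rw [cutFun_top_eq, cutFun_top_eq, cutFun_top_eq, cutFun_top_eq]
    have hsum' : (A.card : ℝ) + B.card = ((A ∪ B).card : ℝ) + (A ∩ B).card := by
      exact_mod_cast hsum
    have hu' : (A.card : ℝ) + 1 ≤ ((A ∪ B).card : ℝ) := by exact_mod_cast hu
    have hi' : ((A ∩ B).card : ℝ) + 1 ≤ (A.card : ℝ) := by exact_mod_cast hi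
    nlinarith [sq_nonneg ((A.card : ℝ) - (A ∩ B).card)]
  have hθ' : θ (A ∪ B) / α + θ (A ∩ B) / α - θ A / α - θ B / α =
      (θ (A ∪ B) + θ (A ∩ B) - θ A - θ B) / α := by ring
  rw [hf A, hf B, hf (A ∪ B), hf (A ∩ B)]
  linarith [hθ'.symm ▸ hθ]
end

section
/- Let V be a finite set and θ : 2^V → ℝ any set function. Then there exist a real number α > 0 and a submodular function f : 2^V → ℝ such that θ(A)/α = f(A) − δ(A) for every A ⊆ V, where δ is the cut function of the complete graph on V. -/
open scoped Classical
open Finset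

/-- Every set function, after rescaling, decomposes as a submodular function minus
the cut function of the complete graph. -/
theorem exists_submodular_decomposition {V : Type*} [Fintype V] [DecidableEq V]
    (θ : Finset V → ℝ) :
    ∃ α : ℝ, 0 < α ∧ ∃ f : Finset V → ℝ,
      (∀ A B : Finset V, f A + f B ≥ f (A ∪ B) + f (A ∩ B)) ∧
      ∀ A : Finset V, θ A / α = f A - cutFun (⊤ : SimpleGraph V) A := by
  have hcut : ∀ A : Finset V,
      cutFun (⊤ : SimpleGraph V) A = (A.card : ℝ) * ((Aᶜ : Finset V).card : ℝ) := by
    intro A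
    unfold cutFun
    rw [show (A.card : ℝ) * ((Aᶜ : Finset V).card : ℝ)
        = ((A ×ˢ (Aᶜ : Finset V)).card : ℝ) by rw [Finset.card_product]; push_cast; ring]
    congr 2
    ext ⟨x, y⟩
    simp only [Finset.mem_filter, Finset.mem_product, Finset.mem_univ, true_and,
      SimpleGraph.top_adj, Finset.mem_compl]
    constructor
    · rintro ⟨-, hx, hy⟩; exact ⟨hx, hy⟩
    · rintro ⟨hx, hy⟩; exact ⟨fun h => hy (h ▸ hx), hx, hy⟩
  have hbound : ∀ S : Finset V, |θ S| ≤ ∑ T : Finset V, |θ T| := fun S =>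
    Finset.single_le_sum (f := fun T => |θ T|) (fun _ _ => abs_nonneg _) (Finset.mem_univ S)
  set M : ℝ := ∑ T : Finset V, |θ T| with hM
  have hMnonneg : 0 ≤ M := Finset.sum_nonneg fun _ _ => abs_nonneg _
  set α : ℝ := 2 * M + 1 with hα
  have hαpos : 0 < α := by positivity
  refine ⟨α, hαpos, fun A => θ A / α + (A.card : ℝ) * ((Aᶜ : Finset V).card : ℝ), ?_, ?_⟩
  · intro A B
    by_cases hAB : A ⊆ B
    · rw [Finset.union_eq_right.mpr hAB, Finset.inter_eq_left.mpr hAB]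
      linarith
    by_cases hBA : B ⊆ A
    · rw [Finset.union_eq_left.mpr hBA, Finset.inter_eq_right.mpr hBA]
    -- both differences nonempty
    have hp : 1 ≤ ((A \ B).card : ℝ) := by
      have := Finset.card_pos.mpr (Finset.sdiff_nonempty.mpr hAB)
      exact_mod_cast this
    have hq : 1 ≤ ((B \ A).card : ℝ) := by
      have := Finset.card_pos.mpr (Finset.sdiff_nonempty.mpr hBA)
      exact_mod_cast this
    have hcompl : ∀ S : Finset V, ((Sᶜ : Finset V).card : ℝ)
        = (Fintype.card V : ℝ) - (S.card : ℝ) := by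
      intro S
      rw [Finset.card_compl]
      have := Finset.card_le_univ S
      push_cast [Nat.cast_sub this]
      rfl
    have ha : (A.card : ℝ) = ((A ∩ B).card : ℝ) + ((A \ B).card : ℝ) := by
      rw [← Nat.cast_add]
      exact_mod_cast (Finset.card_inter_add_card_sdiff A B).symm
    have hb : (B.card : ℝ) = ((A ∩ B).card : ℝ) + ((B \ A).card : ℝ) := by
      rw [Finset.inter_comm, ← Nat.cast_add]
      exact_mod_cast (Finset.card_inter_add_card_sdiff B A).symm
    have hu : ((A ∪ B).card : ℝ) + ((A ∩ B).card : ℝ) = (A.card : ℝ) + (B.card : ℝ) := by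
      exact_mod_cast Finset.card_union_add_card_inter A B
    -- bound on theta terms
    have hθ : θ A + θ B - θ (A ∪ B) - θ (A ∩ B) ≥ -(4 * M) := by
      have h1 := abs_le.1 (hbound A)
      have h2 := abs_le.1 (hbound B)
      have h3 := abs_le.1 (hbound (A ∪ B))
      have h4 := abs_le.1 (hbound (A ∩ B))
      linarith [h1.1, h2.1, h3.2, h4.2]
    have hdiv : (θ A + θ B - θ (A ∪ B) - θ (A ∩ B)) / α ≥ -2 := by
      rw [ge_iff_le, le_div_iff₀ hαpos]
      nlinarith
    -- quadratic part
    have hn : ∀ S : Finset V, (S.card : ℝ) * ((Sᶜ : Finset V).card : ℝ)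
        = (S.card : ℝ) * ((Fintype.card V : ℝ) - (S.card : ℝ)) := by
      intro S; rw [hcompl]
    have key : (A.card : ℝ) * ((Aᶜ : Finset V).card : ℝ)
        + (B.card : ℝ) * ((Bᶜ : Finset V).card : ℝ)
        - ((A ∪ B).card : ℝ) * (((A ∪ B)ᶜ : Finset V).card : ℝ)
        - ((A ∩ B).card : ℝ) * (((A ∩ B)ᶜ : Finset V).card : ℝ)
        = 2 * ((A \ B).card : ℝ) * ((B \ A).card : ℝ) := by
      rw [hn A, hn B, hn (A ∪ B), hn (A ∩ B)]
      have huu : ((A ∪ B).card : ℝ) = ((A ∩ B).card : ℝ) + ((A \ B).card : ℝ)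
          + ((B \ A).card : ℝ) := by
        have := hu; nlinarith [ha, hb]
      rw [huu, ha, hb]
      ring
    have h2pq : 2 * ((A \ B).card : ℝ) * ((B \ A).card : ℝ) ≥ 2 := by nlinarith
    have expand : (θ A / α + (A.card : ℝ) * ((Aᶜ : Finset V).card : ℝ))
        + (θ B / α + (B.card : ℝ) * ((Bᶜ : Finset V).card : ℝ))
        - ((θ (A ∪ B) / α + ((A ∪ B).card : ℝ) * (((A ∪ B)ᶜ : Finset V).card : ℝ))
        + (θ (A ∩ B) / α + ((A ∩ B).card : ℝ) * (((A ∩ B)ᶜ : Finset V).card : ℝ)))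
        = (θ A + θ B - θ (A ∪ B) - θ (A ∩ B)) / α
          + 2 * ((A \ B).card : ℝ) * ((B \ A).card : ℝ) := by
      rw [← key]; ring
    simp only [ge_iff_le]
    linarith [expand, hdiv, h2pq]
  · intro A
    rw [hcut A]
    ring
end

section
/- Let V be a finite set, ∅ ⊆ V₁ ⊆ V₂ ⊆ V, and let g : 2^V → ℝ satisfy g(A) + g(B) ≥ g(A ∪ B) + g(A ∩ B) for all A, B in the interval [V₁, V₂]. Then for every v ∈ V₂ \ V₁: g*[V₁, V₂ \ {v}] − g*[V₁ ∪ {v}, V₂] ≥ g(V₁) − g(V₁ ∪ {v}). -/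
open scoped Classical
open Finset

/-- `g*[V₁, V₂]`: the maximum of `g` over the interval of sets `W` with
`V₁ ⊆ W ⊆ V₂` (as a supremum, which is attained since the interval is a
nonempty finite family when `V₁ ⊆ V₂`). -/
noncomputable def intervalMax {V : Type*} (g : Finset V → ℝ) (V₁ V₂ : Finset V) : ℝ :=
  sSup (g '' {W : Finset V | V₁ ⊆ W ∧ W ⊆ V₂})

/-- First preservation rule. -/
theorem preservation_rule_a {V : Type*} [Fintype V] [DecidableEq V]
    (V₁ V₂ : Finset V) (hV : V₁ ⊆ V₂) (g : Finset V → ℝ)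
    (hg : ∀ A B : Finset V, V₁ ⊆ A → A ⊆ V₂ → V₁ ⊆ B → B ⊆ V₂ →
      g A + g B ≥ g (A ∪ B) + g (A ∩ B))
    (v : V) (hv : v ∈ V₂ \ V₁) :
    intervalMax g V₁ (V₂.erase v) - intervalMax g (insert v V₁) V₂ ≥
      g V₁ - g (insert v V₁) := by
  obtain ⟨hv2, hv1⟩ := Finset.mem_sdiff.mp hv
  -- the maximum over [insert v V₁, V₂] is attained at some W
  set S₂ : Set ℝ := g '' {W : Finset V | insert v V₁ ⊆ W ∧ W ⊆ V₂} with hS₂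
  have hfin : S₂.Finite := (Set.toFinite _).image g
  have hne : S₂.Nonempty := ⟨g V₂, V₂, ⟨Finset.insert_subset hv2 hV, le_refl _⟩, rfl⟩
  have hmem : sSup S₂ ∈ S₂ := hne.csSup_mem hfin
  obtain ⟨W, ⟨hW1, hW2⟩, hWg⟩ := hmem
  have hvW : v ∈ W := hW1 (Finset.mem_insert_self _ _)
  have hV₁W : V₁ ⊆ W := (Finset.subset_insert _ _).trans hW1
  -- facts about W.erase v
  have hA1 : V₁ ⊆ W.erase v := fun x hx =>
    Finset.mem_erase.mpr ⟨fun h => hv1 (h ▸ hx), hV₁W hx⟩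
  have hA2 : W.erase v ⊆ V₂.erase v := Finset.erase_subset_erase _ hW2
  have hA2' : W.erase v ⊆ V₂ := hA2.trans (Finset.erase_subset _ _)
  have hB1 : V₁ ⊆ insert v V₁ := Finset.subset_insert _ _
  have hB2 : insert v V₁ ⊆ V₂ := Finset.insert_subset hv2 hV
  have hunion : W.erase v ∪ insert v V₁ = W := by
    ext x
    simp only [Finset.mem_union, Finset.mem_erase, Finset.mem_insert]
    constructor
    · rintro (⟨_, h⟩ | (rfl | h)) <;> [exact h; exact hvW; exact hV₁W h]
    · intro hx
      by_cases hxv : x = v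
      · exact Or.inr (Or.inl hxv)
      · exact Or.inl ⟨hxv, hx⟩
  have hinter : W.erase v ∩ insert v V₁ = V₁ := by
    ext x
    simp only [Finset.mem_inter, Finset.mem_erase, Finset.mem_insert]
    constructor
    · rintro ⟨⟨hxv, _⟩, (rfl | h)⟩
      · exact absurd rfl hxv
      · exact h
    · intro hx
      exact ⟨⟨fun h => hv1 (h ▸ hx), hV₁W hx⟩, Or.inr hx⟩
  have hsub := hg (W.erase v) (insert v V₁) hA1 hA2' hB1 hB2
  rw [hunion, hinter] at hsub
  -- the first max is at least g (W.erase v)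
  have hle : g (W.erase v) ≤ intervalMax g V₁ (V₂.erase v) := by
    apply le_csSup ((Set.toFinite _).image g).bddAbove
    exact ⟨W.erase v, ⟨hA1, hA2⟩, rfl⟩
  have hmax2 : intervalMax g (insert v V₁) V₂ = g W := hWg.symm
  rw [hmax2]
  linarith
end

section
/- Let V be a finite set, ∅ ⊆ V₁ ⊆ V₂ ⊆ V, and let g : 2^V → ℝ satisfy g(A) + g(B) ≥ g(A ∪ B) + g(A ∩ B) for all A, B in the interval [V₁, V₂]. Then for every v ∈ V₂ \ V₁: g*[V₁ ∪ {v}, V₂] − g*[V₁, V₂ \ {v}] ≥ g(V₂) − g(V₂ \ {v}). -/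
open scoped Classical
open Finset

lemma intervalMax_le_of_mem {V : Type*} [Fintype V] (g : Finset V → ℝ) (V₁ V₂ W : Finset V)
    (h₁ : V₁ ⊆ W) (h₂ : W ⊆ V₂) : g W ≤ intervalMax g V₁ V₂ := by
  apply le_csSup
  · exact (Set.toFinite _).bddAbove
  · exact ⟨W, ⟨h₁, h₂⟩, rfl⟩

lemma intervalMax_exists {V : Type*} [Fintype V] (g : Finset V → ℝ) (V₁ V₂ : Finset V)
    (h : V₁ ⊆ V₂) : ∃ W : Finset V, V₁ ⊆ W ∧ W ⊆ V₂ ∧ intervalMax g V₁ V₂ = g W := by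
  have hne : (g '' {W : Finset V | V₁ ⊆ W ∧ W ⊆ V₂}).Nonempty :=
    ⟨g V₁, V₁, ⟨subset_rfl, h⟩, rfl⟩
  have := hne.csSup_mem (Set.toFinite _)
  obtain ⟨W, ⟨h₁, h₂⟩, hW⟩ := this
  exact ⟨W, h₁, h₂, hW.symm⟩

/-- Second preservation rule. -/
theorem preservation_rule_b {V : Type*} [Fintype V] [DecidableEq V]
    (V₁ V₂ : Finset V) (hV : V₁ ⊆ V₂) (g : Finset V → ℝ)
    (hg : ∀ A B : Finset V, V₁ ⊆ A → A ⊆ V₂ → V₁ ⊆ B → B ⊆ V₂ →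
      g A + g B ≥ g (A ∪ B) + g (A ∩ B))
    (v : V) (hv : v ∈ V₂ \ V₁) :
    intervalMax g (insert v V₁) V₂ - intervalMax g V₁ (V₂.erase v) ≥
      g V₂ - g (V₂.erase v) := by
  obtain ⟨hv₂, hv₁⟩ := Finset.mem_sdiff.mp hv
  have hsub : V₁ ⊆ V₂.erase v := fun x hx =>
    Finset.mem_erase.mpr ⟨fun h => hv₁ (h ▸ hx), hV hx⟩
  obtain ⟨W, hW₁, hW₂, hWmax⟩ := intervalMax_exists g V₁ (V₂.erase v) hsub
  have hWv₂ : W ⊆ V₂ := hW₂.trans (Finset.erase_subset v V₂)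
  have hvW : v ∉ W := fun h => (Finset.mem_erase.mp (hW₂ h)).1 rfl
  have key := hg (insert v W) (V₂.erase v)
    (hW₁.trans (Finset.subset_insert v W)) (Finset.insert_subset hv₂ hWv₂)
    hsub (Finset.erase_subset v V₂)
  have hunion : insert v W ∪ V₂.erase v = V₂ := by
    apply Finset.Subset.antisymm
    · exact Finset.union_subset (Finset.insert_subset hv₂ hWv₂) (Finset.erase_subset v V₂)
    · intro x hx
      by_cases hxv : x = v
      · exact Finset.mem_union_left _ (hxv ▸ Finset.mem_insert_self v W)
      · exact Finset.mem_union_right _ (Finset.mem_erase.mpr ⟨hxv, hx⟩)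
  have hinter : insert v W ∩ V₂.erase v = W := by
    apply Finset.Subset.antisymm
    · intro x hx
      obtain ⟨hx1, hx2⟩ := Finset.mem_inter.mp hx
      rcases Finset.mem_insert.mp hx1 with h | h
      · exact absurd (h ▸ hx2) (by simp)
      · exact h
    · intro x hx
      exact Finset.mem_inter.mpr ⟨Finset.mem_insert_of_mem hx, hW₂ hx⟩
  rw [hunion, hinter] at key
  have h1 : g (insert v W) ≤ intervalMax g (insert v V₁) V₂ :=
    intervalMax_le_of_mem g _ _ _ (Finset.insert_subset_insert v hW₁)
      (Finset.insert_subset hv₂ hWv₂)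
  rw [hWmax]
  linarith
end

section
/- Let V be a finite set and let S ⊆ 2^V be a nonempty subset system. Then there exists a function q : 2^V → ℝ that is nonnegative, normalized (q(∅) = 0), supermodular, and is a membership function of S, i.e., for every V' ⊆ V, q(V') ≤ 0 if and only if V' ∈ S. -/
open scoped Classical
open Finset

lemma nat_pow_aux (x y : ℕ) : 2 ^ x + 2 ^ y ≤ 2 ^ (x + y) + 1 := by
  have hx : 1 ≤ 2 ^ x := Nat.one_le_two_pow
  have hy : 1 ≤ 2 ^ y := Nat.one_le_two_pow
  have h : 2 ^ (x + y) = 2 ^ x * 2 ^ y := pow_add 2 x y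
  nlinarith

lemma nat_supermod (i a b u : ℕ) (h1 : i ≤ a) (h2 : a ≤ u) (h : a + b = u + i) :
    2 ^ a + 2 ^ b ≤ 2 ^ u + 2 ^ i := by
  obtain ⟨x, rfl⟩ := le_iff_exists_add.mp h1
  have hb : i ≤ b := by omega
  obtain ⟨y, rfl⟩ := le_iff_exists_add.mp hb
  have hu : u = i + (x + y) := by omega
  subst hu
  have := nat_pow_aux x y
  calc 2 ^ (i + x) + 2 ^ (i + y) = 2 ^ i * (2 ^ x + 2 ^ y) := by
        rw [pow_add, pow_add]; ring
    _ ≤ 2 ^ i * (2 ^ (x + y) + 1) := Nat.mul_le_mul_left _ this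
    _ = 2 ^ (i + (x + y)) + 2 ^ i := by rw [pow_add]; ring

lemma nat_supermod_strict (i a b u : ℕ) (h1 : i < a) (h2 : i < b) (h : a + b = u + i) :
    2 ^ a + 2 ^ b ≤ 2 ^ u := by
  have hu : 1 ≤ u := by omega
  have ha : 2 ^ a ≤ 2 ^ (u - 1) := Nat.pow_le_pow_right (by norm_num) (by omega)
  have hb : 2 ^ b ≤ 2 ^ (u - 1) := Nat.pow_le_pow_right (by norm_num) (by omega)
  calc 2 ^ a + 2 ^ b ≤ 2 ^ (u - 1) + 2 ^ (u - 1) := add_le_add ha hb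
    _ = 2 ^ (u - 1 + 1) := by rw [pow_succ]; ring
    _ = 2 ^ u := by congr 1; omega

/-- Every nonempty subset system `S` admits a nonnegative, normalized, supermodular
membership function. -/
theorem subsetSystem_exists_supermodular_membership {V : Type*} [Fintype V] [DecidableEq V]
    (S : Set (Finset V)) (hne : S.Nonempty)
    (hS : ∀ V₁ ∈ S, ∀ V₂ ⊆ V₁, V₂ ∈ S) :
    ∃ q : Finset V → ℝ,
      (∀ A : Finset V, 0 ≤ q A) ∧
      q ∅ = 0 ∧
      (∀ A B : Finset V, q A + q B ≤ q (A ∪ B) + q (A ∩ B)) ∧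
      (∀ A : Finset V, q A ≤ 0 ↔ A ∈ S) := by
  obtain ⟨X, hX⟩ := hne
  have hempty : (∅ : Finset V) ∈ S := hS X hX ∅ (Finset.empty_subset X)
  refine ⟨fun A => if A ∈ S then 0 else (2 : ℝ) ^ A.card, ?_, ?_, ?_, ?_⟩
  · intro A
    by_cases h : A ∈ S <;> simp [h] <;> positivity
  · simp [hempty]
  · intro A B
    have hcard : (A ∪ B).card + (A ∩ B).card = A.card + B.card :=
      Finset.card_union_add_card_inter A B
    by_cases hA : A ∈ S <;> by_cases hB : B ∈ S
    · have hI : A ∩ B ∈ S := hS A hA _ Finset.inter_subset_left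
      simp only [hA, hB, hI, if_true]
      by_cases hU : A ∪ B ∈ S <;> simp [hU] <;> positivity
    · -- A ∈ S, B ∉ S : then A ∪ B ∉ S, A ∩ B ∈ S
      have hU : A ∪ B ∉ S := fun h => hB (hS _ h B Finset.subset_union_right)
      have hI : A ∩ B ∈ S := hS A hA _ Finset.inter_subset_left
      simp only [hA, hB, hU, hI, if_true, if_false]
      have : (2 : ℝ) ^ B.card ≤ 2 ^ (A ∪ B).card :=
        pow_le_pow_right₀ (by norm_num) (Finset.card_le_card Finset.subset_union_right)
      linarith
    · have hU : A ∪ B ∉ S := fun h => hA (hS _ h A Finset.subset_union_left)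
      have hI : A ∩ B ∈ S := hS B hB _ Finset.inter_subset_right
      simp only [hA, hB, hU, hI, if_true, if_false]
      have : (2 : ℝ) ^ A.card ≤ 2 ^ (A ∪ B).card :=
        pow_le_pow_right₀ (by norm_num) (Finset.card_le_card Finset.subset_union_left)
      linarith
    · -- both not in S
      have hU : A ∪ B ∉ S := fun h => hA (hS _ h A Finset.subset_union_left)
      by_cases hI : A ∩ B ∈ S
      · -- strict case: |A ∩ B| < |A|, |A ∩ B| < |B|
        have h1 : (A ∩ B).card < A.card := by
          apply Finset.card_lt_card
          refine ⟨Finset.inter_subset_left, fun hsub => ?_⟩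
          exact hA (hS _ hI A hsub)
        have h2 : (A ∩ B).card < B.card := by
          apply Finset.card_lt_card
          refine ⟨Finset.inter_subset_right, fun hsub => ?_⟩
          exact hB (hS _ hI B hsub)
        have key := nat_supermod_strict (A ∩ B).card A.card B.card (A ∪ B).card h1 h2
          (by omega)
        have keyR : (2 : ℝ) ^ A.card + 2 ^ B.card ≤ 2 ^ (A ∪ B).card := by
          exact_mod_cast key
        simp only [hA, hB, hU, hI, if_true, if_false]
        linarith
      · have h1 : (A ∩ B).card ≤ A.card := Finset.card_le_card Finset.inter_subset_left
        have h2 : A.card ≤ (A ∪ B).card := Finset.card_le_card Finset.subset_union_left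
        have key := nat_supermod (A ∩ B).card A.card B.card (A ∪ B).card h1 h2 (by omega)
        have keyR : (2 : ℝ) ^ A.card + 2 ^ B.card ≤
            2 ^ (A ∪ B).card + 2 ^ (A ∩ B).card := by exact_mod_cast key
        simp only [hA, hB, hU, hI, if_false]
        linarith
  · intro A
    by_cases h : A ∈ S <;> simp [h]
end

section
/- Let V be a finite set and let S ⊆ 2^V be a nonempty subset system. Define q : 2^V → ℝ by q(V') = 0 if V' ∈ S and q(V') = e^{|V'|} if V' ∉ S. Then q is nonnegative, normalized (q(∅) = 0), supermodular, and q(V') ≤ 0 if and only if V' ∈ S. -/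
open scoped Classical
open Finset

lemma exp_supmod_aux (i a b : ℝ) (hia : i ≤ a) (hib : i ≤ b) :
    Real.exp a + Real.exp b ≤ Real.exp (a + b - i) + Real.exp i := by
  have h1 : Real.exp a = Real.exp i * Real.exp (a - i) := by
    rw [← Real.exp_add]; ring_nf
  have h2 : Real.exp b = Real.exp i * Real.exp (b - i) := by
    rw [← Real.exp_add]; ring_nf
  have h3 : Real.exp (a + b - i) = Real.exp i * (Real.exp (a - i) * Real.exp (b - i)) := by
    rw [← Real.exp_add, ← Real.exp_add]; ring_nf
  have ha : 1 ≤ Real.exp (a - i) := Real.one_le_exp (by linarith)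
  have hb : 1 ≤ Real.exp (b - i) := Real.one_le_exp (by linarith)
  have hp := Real.exp_pos i
  nlinarith [mul_nonneg (sub_nonneg.2 ha) (sub_nonneg.2 hb)]

lemma exp_strict_aux (a b u : ℝ) (hau : a + 1 ≤ u) (hbu : b + 1 ≤ u) :
    Real.exp a + Real.exp b ≤ Real.exp u := by
  have h1 : Real.exp a ≤ Real.exp (u - 1) := Real.exp_le_exp.2 (by linarith)
  have h2 : Real.exp b ≤ Real.exp (u - 1) := Real.exp_le_exp.2 (by linarith)
  have h3 : Real.exp u = Real.exp (u - 1) * Real.exp 1 := by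
    rw [← Real.exp_add]; ring_nf
  have he : 2 ≤ Real.exp 1 := by
    have := Real.add_one_le_exp 1; linarith
  have hp := (Real.exp_pos (u - 1)).le
  nlinarith

/-- The explicit membership function `q(V') = 0` for `V' ∈ S` and
`q(V') = e^{|V'|}` otherwise is a nonnegative, normalized, supermodular
membership function for any nonempty subset system `S`. -/
theorem explicit_membership_function_properties {V : Type*} [Fintype V] [DecidableEq V]
    (S : Set (Finset V)) (hne : S.Nonempty)
    (hS : ∀ V₁ ∈ S, ∀ V₂ ⊆ V₁, V₂ ∈ S)
    (q : Finset V → ℝ)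
    (hq : ∀ A : Finset V, q A = if A ∈ S then 0 else Real.exp A.card) :
    (∀ A : Finset V, 0 ≤ q A) ∧
    q ∅ = 0 ∧
    (∀ A B : Finset V, q A + q B ≤ q (A ∪ B) + q (A ∩ B)) ∧
    (∀ A : Finset V, q A ≤ 0 ↔ A ∈ S) := by
  have hnonneg : ∀ A : Finset V, 0 ≤ q A := by
    intro A; rw [hq]; split_ifs
    · exact le_refl 0
    · exact (Real.exp_pos _).le
  refine ⟨hnonneg, ?_, ?_, ?_⟩
  · obtain ⟨X, hX⟩ := hne
    rw [hq]; simp [hS X hX ∅ (Finset.empty_subset X)]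
  · intro A B
    by_cases hU : A ∪ B ∈ S
    · have hA : A ∈ S := hS _ hU A Finset.subset_union_left
      have hB : B ∈ S := hS _ hU B Finset.subset_union_right
      have hI : A ∩ B ∈ S := hS _ hA _ Finset.inter_subset_left
      simp [hq, hA, hB, hI, hU]
    · by_cases hI : A ∩ B ∈ S
      · by_cases hA : A ∈ S <;> by_cases hB : B ∈ S
        · simp only [hq, hA, hB, hI, hU, if_true, if_false]
          have := (Real.exp_pos ((A ∪ B).card : ℝ)).le; linarith
        · simp only [hq, hA, hB, hI, hU, if_true, if_false]
          have : (B.card : ℝ) ≤ ((A ∪ B).card : ℝ) := by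
            exact_mod_cast Finset.card_le_card Finset.subset_union_right
          have := Real.exp_le_exp.2 this
          linarith
        · simp only [hq, hA, hB, hI, hU, if_true, if_false]
          have : (A.card : ℝ) ≤ ((A ∪ B).card : ℝ) := by
            exact_mod_cast Finset.card_le_card Finset.subset_union_left
          have := Real.exp_le_exp.2 this
          linarith
        · simp only [hq, hA, hB, hI, hU, if_true, if_false]
          have hAB : ¬ A ⊆ B := fun h => hA (by rwa [Finset.inter_eq_left.2 h] at hI)
          have hBA : ¬ B ⊆ A := fun h => hB (by rwa [Finset.inter_eq_right.2 h] at hI)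
          have h1 : A.card < (A ∪ B).card :=
            Finset.card_lt_card ⟨Finset.subset_union_left, fun h =>
              hBA ((Finset.union_subset_iff.1 h).2)⟩
          have h2 : B.card < (A ∪ B).card :=
            Finset.card_lt_card ⟨Finset.subset_union_right, fun h =>
              hAB ((Finset.union_subset_iff.1 h).1)⟩
          have := exp_strict_aux (A.card : ℝ) (B.card : ℝ) ((A ∪ B).card : ℝ)
            (by exact_mod_cast h1) (by exact_mod_cast h2)
          linarith
      · have hA : A ∉ S := fun h => hI (hS _ h _ Finset.inter_subset_left)
        have hB : B ∉ S := fun h => hI (hS _ h _ Finset.inter_subset_right)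
        simp only [hq, hA, hB, hI, hU, if_false]
        have hsum : (A ∪ B).card + (A ∩ B).card = A.card + B.card :=
          Finset.card_union_add_card_inter A B
        have hcast : ((A ∪ B).card : ℝ) = (A.card : ℝ) + B.card - (A ∩ B).card := by
          have : ((A ∪ B).card : ℝ) + (A ∩ B).card = (A.card : ℝ) + B.card := by
            exact_mod_cast hsum
          linarith
        rw [hcast]
        exact exp_supmod_aux _ _ _
          (by exact_mod_cast Finset.card_le_card Finset.inter_subset_left)
          (by exact_mod_cast Finset.card_le_card Finset.inter_subset_right)
  · intro A
    rw [hq]; split_ifs with h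
    · simp [h]
    · simp only [h, iff_false]
      exact fun hle => absurd hle (not_le.2 (Real.exp_pos _))
end

section
/- Let V be a finite set, θ : 2^V → ℝ a set function, and M > 0 with |θ(V')| < M for all V' ⊆ V. Let S ⊆ 2^V be a nonempty subset system and define q : 2^V → ℝ by q(V') = 0 if V' ∈ S and q(V') = e^{|V'|} if V' ∉ S. Then a set V* ⊆ V maximizes θ over S if and only if V* maximizes θ − M·q over all of 2^V; in particular, every maximizer of θ − M·q over 2^V belongs to S. -/
open scoped Classical
open Finset

/-- Maximizing `θ` over a nonempty subset system `S` is equivalent to the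
unconstrained maximization of `θ - M·q`, where `q(V') = 0` on `S` and
`q(V') = e^{|V'|}` off `S`, and `M` strictly bounds `|θ|`.  In particular every
unconstrained maximizer of `θ - M·q` lies in `S`. -/
theorem constrained_max_iff_unconstrained_max {V : Type*} [Fintype V] [DecidableEq V]
    (θ : Finset V → ℝ) (M : ℝ) (hM : 0 < M)
    (hbound : ∀ A : Finset V, |θ A| < M)
    (S : Set (Finset V)) (hne : S.Nonempty)
    (hS : ∀ V₁ ∈ S, ∀ V₂ ⊆ V₁, V₂ ∈ S)
    (q : Finset V → ℝ)
    (hq : ∀ A : Finset V, q A = if A ∈ S then 0 else Real.exp A.card) :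
    (∀ Vstar : Finset V,
      (Vstar ∈ S ∧ ∀ V' ∈ S, θ V' ≤ θ Vstar) ↔
      (∀ V' : Finset V, θ V' - M * q V' ≤ θ Vstar - M * q Vstar)) ∧
    (∀ Vstar : Finset V,
      (∀ V' : Finset V, θ V' - M * q V' ≤ θ Vstar - M * q Vstar) → Vstar ∈ S) := by
  -- ∅ ∈ S
  obtain ⟨A₀, hA₀⟩ := hne
  have hempty : (∅ : Finset V) ∈ S := hS A₀ hA₀ ∅ (Finset.empty_subset _)
  -- q vanishes on S
  have hqS : ∀ A ∈ S, q A = 0 := by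
    intro A hA; rw [hq]; simp [hA]
  -- off S the penalized value is below -M
  have hoff : ∀ A : Finset V, A ∉ S → θ A - M * q A < -M := by
    intro A hA
    have hAne : A ≠ ∅ := by
      intro h; exact hA (h ▸ hempty)
    have hcard : (1 : ℝ) ≤ (A.card : ℝ) := by
      have := Finset.card_pos.mpr (Finset.nonempty_of_ne_empty hAne)
      exact_mod_cast this
    have hqA : q A = Real.exp A.card := by rw [hq]; simp [hA]
    have hexp : (2 : ℝ) ≤ Real.exp A.card := by
      calc (2 : ℝ) ≤ Real.exp 1 := by
            have := Real.add_one_le_exp (1 : ℝ); linarith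
        _ ≤ Real.exp A.card := Real.exp_le_exp.mpr hcard
    have hθA : θ A < M := (abs_lt.mp (hbound A)).2
    have : M * 2 ≤ M * q A := by
      rw [hqA]; exact mul_le_mul_of_nonneg_left hexp hM.le
    linarith
  -- values on S exceed -M
  have hon : ∀ A ∈ S, -M < θ A - M * q A := by
    intro A hA
    rw [hqS A hA]
    have := (abs_lt.mp (hbound A)).1
    linarith
  constructor
  · intro Vstar
    constructor
    · rintro ⟨hVS, hmax⟩ V'
      by_cases hV' : V' ∈ S
      · rw [hqS _ hV', hqS _ hVS]; simpa using hmax V' hV'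
      · have h1 := hoff V' hV'
        have h2 := hon Vstar hVS
        linarith
    · intro hmax
      have hVS : Vstar ∈ S := by
        by_contra hVS
        have h1 := hoff Vstar hVS
        have h2 := hon ∅ hempty
        have := hmax ∅
        linarith
      refine ⟨hVS, fun V' hV' => ?_⟩
      have := hmax V'
      rw [hqS _ hV', hqS _ hVS] at this
      linarith
  · intro Vstar hmax
    by_contra hVS
    have h1 := hoff Vstar hVS
    have h2 := hon ∅ hempty
    have := hmax ∅
    linarith
end
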